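/- arXiv:1708.07017 — 2 statements merged into one kernel-verified Lean document; each statement's English description precedes it below -/
import Mathlib

section
/- Let θ₁ ∈ (−π, π), let n be a positive integer, and let g : ℝ → ℝ be 2π-periodic and n times continuously differentiable. Then ∫_{−π}^{π} g(θ)·(∂ⁿ/∂θⁿ) u_δ(ρ, θ, θ₁) dθ tends to (−1)ⁿ·g⁽ⁿ⁾(θ₁) as ρ → 1⁻, where u_δ(ρ, θ, θ₁) = 1/(2π) − (1/π)·ρ(ρ − cos(θ − θ₁)) / ((ρ² + 1) − 2ρ cos(θ − θ₁)) and ∂ⁿ/∂θⁿ denotes the n-th partial derivative with respect to θ at fixed ρ. -/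
/-!
For `|ρ| < 1`, `u_δ(ρ, ·, θ₁)` is the Poisson kernel `P_ρ(· - θ₁)` of the unit disc, a smooth
`2π`-periodic function. Integrating by parts `n` times (the boundary terms cancel by periodicity)
turns the integral into `(-1)ⁿ ∫ g⁽ⁿ⁾(θ) P_ρ(θ - θ₁) dθ`. The kernels `P_ρ` are nonnegative, have
unit mass and tend to `0` uniformly away from `0` as `ρ → 1⁻`, so they are an approximate identity
and the integral tends to `g⁽ⁿ⁾(θ₁)`.
-/

open Real Filter Topology MeasureTheory Set intervalIntegral
open scoped ContDiff

namespace Function.Periodic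

variable {𝕜 F : Type*} [NontriviallyNormedField 𝕜] [NormedAddCommGroup F] [NormedSpace 𝕜 F]
  {f : 𝕜 → F} {c : 𝕜}

protected lemma deriv (hf : Periodic f c) : Periodic (deriv f) c := fun x => by
  rw [← deriv_comp_add_const, funext hf]

protected lemma iteratedDeriv (hf : Periodic f c) (n : ℕ) : Periodic (iteratedDeriv n f) c := by
  induction n with
  | zero => simpa using hf
  | succ n ih => simpa only [iteratedDeriv_succ] using ih.deriv

variable {u v : ℝ → ℝ} {T : ℝ}

lemma integral_mul_deriv (hu : Periodic u T) (hv : Periodic v T)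
    (hu₁ : ContDiff ℝ 1 u) (hv₁ : ContDiff ℝ 1 v) (a : ℝ) :
    ∫ x in a..a + T, u x * deriv v x = -∫ x in a..a + T, deriv u x * v x := by
  have hdu := hu₁.differentiable one_ne_zero
  have hdv := hv₁.differentiable one_ne_zero
  rw [integral_mul_deriv_eq_deriv_mul (fun x _ => (hdu x).hasDerivAt)
    (fun x _ => (hdv x).hasDerivAt) ((hu₁.continuous_deriv le_rfl).intervalIntegrable _ _)
    ((hv₁.continuous_deriv le_rfl).intervalIntegrable _ _), hu a, hv a]
  ring

lemma integral_mul_iteratedDeriv (k : ℕ) (hu : Periodic u T) (hv : Periodic v T)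
    (huk : ContDiff ℝ k u) (hvk : ContDiff ℝ k v) (a : ℝ) :
    ∫ x in a..a + T, u x * iteratedDeriv k v x =
      (-1) ^ k * ∫ x in a..a + T, iteratedDeriv k u x * v x := by
  induction k generalizing u with
  | zero => simp
  | succ k ih =>
    have hvk' : ContDiff ℝ 1 (iteratedDeriv k v) := by
      rw [iteratedDeriv_eq_iterate]; exact (add_comm k 1 ▸ hvk).iterate_deriv' 1 k
    rw [iteratedDeriv_succ, hu.integral_mul_deriv (hv.iteratedDeriv k) (huk.of_le (by simp)) hvk',
      ih hu.deriv huk.deriv' (hvk.of_le (by simp)), iteratedDeriv_succ']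
    ring

end Function.Periodic

noncomputable def circlePoissonKernel (ρ φ : ℝ) : ℝ :=
  (1 - ρ ^ 2) / (2 * π * ((ρ ^ 2 + 1) - 2 * ρ * cos φ))

namespace circlePoissonKernel

lemma denom_pos {ρ : ℝ} (hρ : |ρ| < 1) (φ : ℝ) : 0 < (ρ ^ 2 + 1) - 2 * ρ * cos φ := by
  have : ρ * cos φ ≤ |ρ| := (le_abs_self _).trans (by
    rw [abs_mul]; exact mul_le_of_le_one_right (abs_nonneg _) (abs_cos_le_one φ))
  nlinarith [sq_abs ρ, abs_nonneg ρ]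

lemma nonneg {ρ : ℝ} (hρ : |ρ| < 1) (φ : ℝ) : 0 ≤ circlePoissonKernel ρ φ := by
  have : 0 ≤ 1 - ρ ^ 2 := by nlinarith [sq_abs ρ, abs_nonneg ρ]
  exact div_nonneg this (mul_pos (by positivity) (denom_pos hρ φ)).le

lemma contDiff {ρ : ℝ} (hρ : |ρ| < 1) : ContDiff ℝ ∞ (circlePoissonKernel ρ) :=
  contDiff_const.div (by fun_prop) fun φ => (mul_pos (by positivity) (denom_pos hρ φ)).ne'

lemma periodic (ρ : ℝ) : Function.Periodic (circlePoissonKernel ρ) (2 * π) := fun φ => by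
  simp [circlePoissonKernel]

lemma two_pi_mul_eq_poissonKernel (ρ φ : ℝ) :
    2 * π * circlePoissonKernel ρ φ = poissonKernel 0 ρ (circleMap 0 1 φ) := by
  have hnorm : ‖circleMap 0 1 φ - ρ‖ ^ 2 = (ρ ^ 2 + 1) - 2 * ρ * cos φ := by
    rw [Complex.sq_norm, Complex.normSq_apply]
    simp [circleMap_zero, Complex.exp_ofReal_mul_I_re, Complex.exp_ofReal_mul_I_im]
    nlinarith [sin_sq_add_cos_sq φ]
  rw [poissonKernel_def, sub_zero, sub_zero, hnorm, norm_circleMap_zero, circlePoissonKernel]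
  field_simp
  simp

-- Poisson's integral formula for the constant function `1`.
lemma integral_eq_one {ρ : ℝ} (hρ : |ρ| < 1) :
    ∫ φ in (-π)..π, circlePoissonKernel ρ φ = 1 := by
  have hw : (ρ : ℂ) ∈ Metric.ball 0 1 := by simpa using hρ
  have key := (diffContOnCl_const (c := (1 : ℂ))).circleAverage_poissonKernel_smul hw
  simp only [circleAverage_def, Pi.smul_apply', ← two_pi_mul_eq_poissonKernel,
    Complex.real_smul, mul_one, integral_ofReal, intervalIntegral.integral_const_mul] at key
  have hshift := (periodic ρ).intervalIntegral_add_eq (-π) 0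
  rw [show -π + 2 * π = π by ring, zero_add] at hshift
  rw [hshift]
  have : (2 * π)⁻¹ * (2 * π * ∫ φ in 0..2 * π, circlePoissonKernel ρ φ) = 1 := by
    exact_mod_cast key
  field_simp at this
  exact this

lemma le_of_cos_le {ρ φ ψ : ℝ} (h0 : 0 ≤ ρ) (h1 : ρ < 1) (hcos : cos φ ≤ cos ψ) :
    circlePoissonKernel ρ φ ≤ circlePoissonKernel ρ ψ := by
  have hρ : |ρ| < 1 := abs_lt.mpr ⟨by linarith, h1⟩
  refine div_le_div_of_nonneg_left (by nlinarith) (mul_pos (by positivity) (denom_pos hρ ψ)) ?_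
  gcongr

lemma tendsto_zero_of_cos_ne_one {ψ : ℝ} (hψ : cos ψ ≠ 1) :
    Tendsto (circlePoissonKernel · ψ) (𝓝 1) (𝓝 0) := by
  have hcont : ContinuousAt (circlePoissonKernel · ψ) 1 := by
    refine ContinuousAt.div (by fun_prop) (by fun_prop) ?_
    norm_num
    exact fun h => hψ (by linarith)
  simpa [circlePoissonKernel] using hcont.tendsto

lemma tendstoUniformlyOn_zero {δ : ℝ} (hδ : 0 < δ) (hδπ : δ ≤ π) :
    TendstoUniformlyOn circlePoissonKernel 0 (𝓝[<] 1) {φ | δ ≤ |φ| ∧ |φ| ≤ π} := by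
  have hcosδ : cos δ ≠ 1 := by
    have := cos_lt_cos_of_nonneg_of_le_pi le_rfl hδπ hδ
    rw [cos_zero] at this
    exact this.ne
  rw [Metric.tendstoUniformlyOn_iff]
  intro ε hε
  filter_upwards [Ioo_mem_nhdsLT zero_lt_one,
    nhdsWithin_le_nhds ((tendsto_zero_of_cos_ne_one hcosδ).eventually (gt_mem_nhds hε))]
    with ρ ⟨h0, h1⟩ hρε φ ⟨hδφ, hφπ⟩
  have hcos : cos φ ≤ cos δ := by
    rw [← cos_abs φ]; exact cos_le_cos_of_nonneg_of_le_pi hδ.le hφπ hδφ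
  rw [Pi.zero_apply, dist_zero_left, Real.norm_of_nonneg (nonneg (abs_lt.mpr ⟨by linarith, h1⟩) φ)]
  exact (le_of_cos_le h0.le h1 hcos).trans_lt hρε

theorem tendsto_integral_mul {h : ℝ → ℝ} (hint : IntervalIntegrable h volume (-π) π)
    (hc : ContinuousAt h 0) :
    Tendsto (fun ρ => ∫ φ in (-π)..π, circlePoissonKernel ρ φ * h φ) (𝓝[<] 1) (𝓝 (h 0)) := by
  have hs : MeasurableSet (Ioc (-π) π) := measurableSet_Ioc
  have hball : ∀ u : Set ℝ, IsOpen u → 0 ∈ u →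
      TendstoUniformlyOn circlePoissonKernel 0 (𝓝[<] 1) (Ioc (-π) π \ u) := by
    intro u hu hu0
    obtain ⟨δ, hδ, hδu⟩ := Metric.isOpen_iff.mp hu 0 hu0
    refine (tendstoUniformlyOn_zero (lt_min hδ pi_pos) (min_le_right δ π)).mono ?_
    rintro φ ⟨⟨hφl, hφr⟩, hφu⟩
    refine ⟨?_, abs_le.mpr ⟨hφl.le, hφr⟩⟩
    by_contra! hlt
    exact hφu (hδu (by simpa using hlt.trans_le (min_le_left δ π)))
  have hev : ∀ᶠ ρ in 𝓝[<] (1 : ℝ), |ρ| < 1 := by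
    filter_upwards [Ioo_mem_nhdsLT (show (-1 : ℝ) < 1 by norm_num)] with ρ hρ
    exact abs_lt.mpr hρ
  have hlim := tendsto_setIntegral_peak_smul_of_integrableOn_of_tendsto hs hs subset_rfl
    self_mem_nhdsWithin measure_Ioc_lt_top.ne
    (hev.mono fun ρ hρ φ _ => nonneg hρ φ) hball
    (tendsto_const_nhds.congr' (hev.mono fun ρ hρ => by
      dsimp only
      rw [← integral_of_le (by linarith [pi_pos]), integral_eq_one hρ]))
    (hev.mono fun ρ hρ => (contDiff hρ).continuous.aestronglyMeasurable)
    ((intervalIntegrable_iff_integrableOn_Ioc_of_le (by linarith [pi_pos])).mp hint)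
    (hc.tendsto.mono_left nhdsWithin_le_nhds)
  simpa only [smul_eq_mul, ← integral_of_le (by linarith [pi_pos] : -π ≤ π)] using hlim

theorem tendsto_integral_mul_sub {h : ℝ → ℝ} (hc : Continuous h)
    (hper : Function.Periodic h (2 * π)) (θ₁ : ℝ) :
    Tendsto (fun ρ => ∫ θ in (-π)..π, h θ * circlePoissonKernel ρ (θ - θ₁)) (𝓝[<] 1)
      (𝓝 (h θ₁)) := by
  have hlim := tendsto_integral_mul (h := fun φ => h (φ + θ₁))
    ((hc.comp (continuous_add_const θ₁)).intervalIntegrable _ _)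
    (hc.comp (continuous_add_const θ₁)).continuousAt
  rw [zero_add] at hlim
  refine hlim.congr fun ρ => ?_
  set F : ℝ → ℝ := fun φ => circlePoissonKernel ρ φ * h (φ + θ₁)
  have hF : Function.Periodic F (2 * π) := (periodic ρ).mul (hper.add_const θ₁)
  calc ∫ φ in (-π)..π, F φ
      = ∫ φ in (-π - θ₁)..(π - θ₁), F φ := by
        simpa only [show -π - θ₁ + 2 * π = π - θ₁ by ring, show -π + 2 * π = π by ring]
          using (hF.intervalIntegral_add_eq (-π) (-π - θ₁))
    _ = ∫ θ in (-π)..π, F (θ - θ₁) := (integral_comp_sub_right F θ₁).symm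
    _ = ∫ θ in (-π)..π, h θ * circlePoissonKernel ρ (θ - θ₁) := by
        simp only [F, sub_add_cancel, mul_comm]

end circlePoissonKernel

lemma uDelta_eq_circlePoissonKernel {ρ : ℝ} (hρ : |ρ| < 1) (φ : ℝ) :
    1 / (2 * π) - (1 / π) * (ρ * (ρ - cos φ)) / ((ρ ^ 2 + 1) - 2 * ρ * cos φ) =
      circlePoissonKernel ρ φ := by
  have := (circlePoissonKernel.denom_pos hρ φ).ne'
  rw [circlePoissonKernel]
  field_simp
  ring

theorem stmt_10_general (θ₁ : ℝ) (n : ℕ)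
    (g : ℝ → ℝ) (hper : Function.Periodic g (2 * Real.pi))
    (hg : ContDiff ℝ n g) :
    Filter.Tendsto (fun ρ : ℝ =>
        ∫ θ in (-Real.pi)..Real.pi,
          g θ *
            iteratedDeriv n (fun t : ℝ =>
              1 / (2 * Real.pi) -
                (1 / Real.pi) * (ρ * (ρ - Real.cos (t - θ₁))) /
                  ((ρ ^ 2 + 1) - 2 * ρ * Real.cos (t - θ₁))) θ)
      (nhdsWithin 1 (Set.Iio 1)) (nhds ((-1 : ℝ) ^ n * iteratedDeriv n g θ₁)) := by
  have hlim := (circlePoissonKernel.tendsto_integral_mul_sub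
    (hg.continuous_iteratedDeriv n le_rfl) (hper.iteratedDeriv n) θ₁).const_mul ((-1) ^ n)
  refine hlim.congr' ?_
  filter_upwards [Ioo_mem_nhdsLT (show (-1 : ℝ) < 1 by norm_num)] with ρ hρ
  have hρ : |ρ| < 1 := abs_lt.mpr hρ
  have hP : ContDiff ℝ n fun t => circlePoissonKernel ρ (t - θ₁) :=
    ((circlePoissonKernel.contDiff hρ).comp (contDiff_id.sub contDiff_const)).of_le
      (by exact_mod_cast le_top)
  have hparts := hper.integral_mul_iteratedDeriv n ((circlePoissonKernel.periodic ρ).sub_const θ₁)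
    hg hP (-π)
  rw [show -π + 2 * π = π by ring] at hparts
  simp only [uDelta_eq_circlePoissonKernel hρ, hparts]

/-- the fundamental property of the n-th derivative of the Dirac
delta "function": for a `2π`-periodic, `n` times continuously differentiable
test function `g`,
`∫_{−π}^{π} g(θ)·(∂ⁿ/∂θⁿ) u_δ(ρ, θ, θ₁) dθ → (−1)ⁿ·g⁽ⁿ⁾(θ₁)` as `ρ → 1⁻`. -/
theorem stmt_10 (θ₁ : ℝ) (hθ₁ : θ₁ ∈ Set.Ioo (-Real.pi) Real.pi)
    (n : ℕ) (hn : 0 < n)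
    (g : ℝ → ℝ) (hper : Function.Periodic g (2 * Real.pi))
    (hg : ContDiff ℝ n g) :
    Filter.Tendsto (fun ρ : ℝ =>
        ∫ θ in (-Real.pi)..Real.pi,
          g θ *
            iteratedDeriv n (fun t : ℝ =>
              1 / (2 * Real.pi) -
                (1 / Real.pi) * (ρ * (ρ - Real.cos (t - θ₁))) /
                  ((ρ ^ 2 + 1) - 2 * ρ * Real.cos (t - θ₁))) θ)
      (nhdsWithin 1 (Set.Iio 1)) (nhds ((-1 : ℝ) ^ n * iteratedDeriv n g θ₁)) :=
  stmt_10_general θ₁ n g hper hg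
end

section
/- Let θ₁ ∈ ℝ, let n be a positive integer, and let θ ∈ ℝ be such that θ − θ₁ is not an integer multiple of 2π. Then the n-th partial derivative with respect to θ (at fixed ρ) of u_δ(ρ, θ, θ₁) = 1/(2π) − (1/π)·ρ(ρ − cos(θ − θ₁)) / ((ρ² + 1) − 2ρ cos(θ − θ₁)) tends to 0 as ρ → 1⁻. -/
/-!
For fixed `ρ`, the `n`-th `θ`-derivative of `u_δ` is a partial derivative of a function that is
smooth in `(ρ, θ)` wherever the denominator `|ρe^{iθ} − e^{iθ₁}|² = ρ² + 1 − 2ρ cos(θ − θ₁)` is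
nonzero, so it is jointly continuous there. At `ρ = 1` and `θ − θ₁ ∉ 2πℤ` the point lies in that
region, and `u_δ(1, ·) = 1/(2π) − (1/π)·(1 − cos)/(2(1 − cos))` vanishes identically near `θ`, so
all its `θ`-derivatives vanish at `(1, θ)`; continuity gives the limit `0`.
-/

open Real Filter Topology
open scoped ContDiff

section PartialDeriv

variable {𝕜 E F : Type*} [NontriviallyNormedField 𝕜] [NormedAddCommGroup E] [NormedSpace 𝕜 E]
  [NormedAddCommGroup F] [NormedSpace 𝕜 F] {f : E × 𝕜 → F} {U : Set (E × 𝕜)}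

theorem HasFDerivAt.hasDerivAt_snd {p : E × 𝕜} {f' : E × 𝕜 →L[𝕜] F} (hf : HasFDerivAt f f' p) :
    HasDerivAt (fun t => f (p.1, t)) (f' (0, 1)) p.2 :=
  hf.comp_hasDerivAt p.2 ((hasDerivAt_const p.2 p.1).prodMk (hasDerivAt_id p.2))

theorem ContDiffOn.deriv_snd (hf : ContDiffOn 𝕜 ∞ f U) (hU : IsOpen U) :
    ContDiffOn 𝕜 ∞ (fun p => deriv (fun t => f (p.1, t)) p.2) U := by
  refine ((hf.fderiv_of_isOpen hU le_rfl).clm_apply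
    (contDiffOn_const (c := ((0 : E), (1 : 𝕜))))).congr fun p hp => ?_
  have hdiff : DifferentiableAt 𝕜 f p :=
    (hf.differentiableOn (by simp)).differentiableAt (hU.mem_nhds hp)
  exact hdiff.hasFDerivAt.hasDerivAt_snd.deriv

theorem ContDiffOn.iteratedDeriv_snd (hf : ContDiffOn 𝕜 ∞ f U) (hU : IsOpen U) (n : ℕ) :
    ContDiffOn 𝕜 ∞ (fun p => iteratedDeriv n (fun t => f (p.1, t)) p.2) U := by
  induction n with
  | zero => simpa using hf
  | succ n ih => simpa only [iteratedDeriv_succ] using ih.deriv_snd hU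

end PartialDeriv

/-- `u_δ` as a function of `(ρ, θ)`. -/
noncomputable def uDelta (θ₁ : ℝ) (p : ℝ × ℝ) : ℝ :=
  1 / (2 * π) -
    (1 / π) * (p.1 * (p.1 - cos (p.2 - θ₁))) / ((p.1 ^ 2 + 1) - 2 * p.1 * cos (p.2 - θ₁))

def uDeltaDomain (θ₁ : ℝ) : Set (ℝ × ℝ) :=
  {p | (p.1 ^ 2 + 1) - 2 * p.1 * cos (p.2 - θ₁) ≠ 0}

theorem isOpen_uDeltaDomain (θ₁ : ℝ) : IsOpen (uDeltaDomain θ₁) :=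
  isOpen_ne_fun (by fun_prop) continuous_const

theorem contDiffOn_uDelta (θ₁ : ℝ) : ContDiffOn ℝ ∞ (uDelta θ₁) (uDeltaDomain θ₁) :=
  contDiffOn_const.sub ((ContDiff.contDiffOn (by fun_prop)).div (ContDiff.contDiffOn (by fun_prop))
    fun _ hp => hp)

theorem one_mem_uDeltaDomain {θ₁ t : ℝ} (ht : cos (t - θ₁) ≠ 1) :
    ((1 : ℝ), t) ∈ uDeltaDomain θ₁ := by
  intro hD
  exact ht (by linarith)

theorem uDelta_one {θ₁ t : ℝ} (ht : cos (t - θ₁) ≠ 1) : uDelta θ₁ (1, t) = 0 := by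
  have hc : 1 - cos (t - θ₁) ≠ 0 := sub_ne_zero.2 (Ne.symm ht)
  have hπ := pi_ne_zero
  rw [uDelta, show (1 : ℝ) ^ 2 + 1 - 2 * 1 * cos (t - θ₁) = 2 * (1 - cos (t - θ₁)) by ring]
  field_simp
  ring

theorem iteratedDeriv_uDelta_one {θ₁ θ : ℝ} (hθ : cos (θ - θ₁) ≠ 1) (n : ℕ) :
    iteratedDeriv n (fun t => uDelta θ₁ (1, t)) θ = 0 := by
  have hnear : ∀ᶠ t in 𝓝 θ, cos (t - θ₁) ≠ 1 :=
    (isOpen_ne_fun (f := fun t => cos (t - θ₁)) (by fun_prop) continuous_const).mem_nhds hθ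
  have hzero : (fun t => uDelta θ₁ (1, t)) =ᶠ[𝓝 θ] fun _ => 0 := by
    filter_upwards [hnear] with t ht
    exact uDelta_one ht
  rw [hzero.iteratedDeriv_eq, iteratedDeriv_fun_const_zero]

theorem stmt_11_general (θ₁ : ℝ) (n : ℕ) (θ : ℝ)
    (h : ∀ k : ℤ, θ - θ₁ ≠ 2 * Real.pi * k) :
    Filter.Tendsto (fun ρ : ℝ =>
        iteratedDeriv n (fun t : ℝ =>
          1 / (2 * Real.pi) -
            (1 / Real.pi) * (ρ * (ρ - Real.cos (t - θ₁))) /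
              ((ρ ^ 2 + 1) - 2 * ρ * Real.cos (t - θ₁))) θ)
      (nhdsWithin 1 (Set.Iio 1)) (nhds 0) := by
  have hθ : cos (θ - θ₁) ≠ 1 := fun hc => by
    obtain ⟨k, hk⟩ := (cos_eq_one_iff _).1 hc
    exact h k (by rw [← hk]; ring)
  have hcont : ContinuousAt (fun p => iteratedDeriv n (fun t => uDelta θ₁ (p.1, t)) p.2) (1, θ) :=
    ((contDiffOn_uDelta θ₁).iteratedDeriv_snd (isOpen_uDeltaDomain θ₁) n).continuousOn.continuousAt
      ((isOpen_uDeltaDomain θ₁).mem_nhds (one_mem_uDeltaDomain hθ))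
  have hlim : Tendsto (fun ρ => iteratedDeriv n (fun t => uDelta θ₁ (ρ, t)) θ) (𝓝[<] 1)
      (𝓝 (iteratedDeriv n (fun t => uDelta θ₁ (1, t)) θ)) :=
    (hcont.comp (f := fun ρ : ℝ => (ρ, θ)) (by fun_prop)).tendsto.mono_left nhdsWithin_le_nhds
  rwa [iteratedDeriv_uDelta_one hθ] at hlim

/-- away from the singular point (`θ − θ₁` not an integer
multiple of `2π`), the n-th partial derivative of `u_δ(ρ, θ, θ₁)` with respect
to `θ` at fixed `ρ` tends to `0` as `ρ → 1⁻`. -/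
theorem stmt_11 (θ₁ : ℝ) (n : ℕ) (hn : 0 < n) (θ : ℝ)
    (h : ∀ k : ℤ, θ - θ₁ ≠ 2 * Real.pi * k) :
    Filter.Tendsto (fun ρ : ℝ =>
        iteratedDeriv n (fun t : ℝ =>
          1 / (2 * Real.pi) -
            (1 / Real.pi) * (ρ * (ρ - Real.cos (t - θ₁))) /
              ((ρ ^ 2 + 1) - 2 * ρ * Real.cos (t - θ₁))) θ)
      (nhdsWithin 1 (Set.Iio 1)) (nhds 0) :=
  stmt_11_general θ₁ n θ h
end
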